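/- arXiv:0908.4387 — 2 statements merged into one kernel-verified Lean document; each statement's English description precedes it below -/
import Mathlib

section
/- For every n ≥ 1, the tuple (d; m₁, …, m_{M+1}) := (g_n·g_{n+1}; W(g_{n+1}², g_n²), 1) — the label sequence of the pair (g_{n+1}², g_n²) followed by one extra entry equal to 1 — satisfies the two Diophantine conditions d² + 1 = Σ_{i} m_i² and 3d − 1 = Σ_{i} m_i. -/
/-!
Along the Euclidean recursion, `W p q` tiles the `p × q` rectangle by squares, one of side `m`
for each entry `m`; hence `Σ mᵢ² = p q`, and the sides add up to `p + q - gcd p q`.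
The odd-indexed Fibonacci numbers satisfy `g (n+2) + g n = 3 g (n+1)`, which preserves the
Markov-type identity `a² + c² + 1 = 3 a c` for consecutive terms `a = g n`, `c = g (n+1)`;
this identity forces `a` and `c` to be coprime, and with `d = a c` it turns both Diophantine
conditions into the two tiling identities for `W (c²) (a²)`.
-/

def g : ℕ → ℕ
  | 0 => 1
  | (n+1) => Nat.fib (2*n+1)

def W (p q : ℕ) : List ℕ :=
  if hq : q = 0 then []
  else if p % q = 0 then List.replicate (p / q) q
  else List.replicate (p / q) q ++ W q (p % q)
termination_by q
decreasing_by exact Nat.mod_lt _ (Nat.pos_of_ne_zero hq)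

theorem W_map_sq_sum (p q : ℕ) : ((W p q).map (· ^ 2)).sum = p * q := by
  induction p, q using W.induct with
  | case1 p => simp [W]
  | case2 p q hq hdvd =>
    rw [W, dif_neg hq, if_pos hdvd]
    simp only [List.map_replicate, List.sum_replicate, smul_eq_mul]
    rw [sq, ← mul_assoc, Nat.div_mul_cancel (Nat.dvd_of_mod_eq_zero hdvd)]
  | case3 p q hq hndvd ih =>
    rw [W, dif_neg hq, if_neg hndvd]
    simp only [List.map_append, List.sum_append, List.map_replicate, List.sum_replicate,
      smul_eq_mul, ih]
    calc p / q * q ^ 2 + q * (p % q) = (q * (p / q) + p % q) * q := by ring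
      _ = p * q := by rw [Nat.div_add_mod]

theorem W_sum_add_gcd (p q : ℕ) : (W p q).sum + Nat.gcd p q = p + q := by
  induction p, q using W.induct with
  | case1 p => simp [W]
  | case2 p q hq hdvd =>
    rw [W, dif_neg hq, if_pos hdvd, Nat.gcd_eq_right (Nat.dvd_of_mod_eq_zero hdvd)]
    simp only [List.sum_replicate, smul_eq_mul]
    rw [Nat.div_mul_cancel (Nat.dvd_of_mod_eq_zero hdvd)]
  | case3 p q hq hndvd ih =>
    rw [W, dif_neg hq, if_neg hndvd, Nat.gcd_comm p q, Nat.gcd_rec q p,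
      Nat.gcd_comm (p % q) q]
    simp only [List.sum_append, List.sum_replicate, smul_eq_mul]
    have := Nat.div_add_mod' p q
    omega

theorem Nat.coprime_of_sq_add_sq_add_one_eq {a c k : ℕ} (h : a ^ 2 + c ^ 2 + 1 = k * a * c) :
    Nat.Coprime a c := by
  have hsq : Nat.gcd a c ∣ a ^ 2 + c ^ 2 :=
    dvd_add (dvd_pow (Nat.gcd_dvd_left a c) two_ne_zero)
      (dvd_pow (Nat.gcd_dvd_right a c) two_ne_zero)
  have hsq_succ : Nat.gcd a c ∣ a ^ 2 + c ^ 2 + 1 :=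
    h ▸ Dvd.dvd.mul_right (Dvd.dvd.mul_left (Nat.gcd_dvd_left a c) k) c
  exact Nat.eq_one_of_dvd_one ((Nat.dvd_add_right hsq).mp hsq_succ)

theorem g_add_two_add_g (n : ℕ) : g (n + 2) + g n = 3 * g (n + 1) := by
  cases n with
  | zero => decide
  | succ k =>
    show Nat.fib (2 * k + 5) + Nat.fib (2 * k + 1) = 3 * Nat.fib (2 * k + 3)
    have h5 : Nat.fib (2 * k + 5) = Nat.fib (2 * k + 3) + Nat.fib (2 * k + 4) := Nat.fib_add_two
    have h4 : Nat.fib (2 * k + 4) = Nat.fib (2 * k + 2) + Nat.fib (2 * k + 3) := Nat.fib_add_two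
    have h3 : Nat.fib (2 * k + 3) = Nat.fib (2 * k + 1) + Nat.fib (2 * k + 2) := Nat.fib_add_two
    omega

theorem g_sq_add_g_succ_sq (n : ℕ) : g n ^ 2 + g (n + 1) ^ 2 + 1 = 3 * g n * g (n + 1) := by
  induction n with
  | zero => decide
  | succ n ih =>
    have hrec := g_add_two_add_g n
    zify at ih hrec ⊢
    linear_combination ih + (g (n + 2) - g n : ℤ) * hrec

theorem Ean_diophantine_general (n : ℕ) :
    (g n * g (n+1))^2 + 1 = (((W ((g (n+1))^2) ((g n)^2)) ++ [1]).map (fun m => m^2)).sum ∧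
    3 * (g n * g (n+1)) - 1 = ((W ((g (n+1))^2) ((g n)^2)) ++ [1]).sum := by
  have markov := g_sq_add_g_succ_sq n
  have hgcd : Nat.gcd (g (n + 1) ^ 2) (g n ^ 2) = 1 :=
    ((Nat.coprime_of_sq_add_sq_add_one_eq markov).pow 2 2).symm
  have hsum := W_sum_add_gcd (g (n + 1) ^ 2) (g n ^ 2)
  constructor
  · simp only [List.map_append, List.sum_append, W_map_sq_sum, List.map_cons, List.map_nil,
      List.sum_cons, List.sum_nil]
    ring
  · simp only [List.sum_append, List.sum_cons, List.sum_nil]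
    rw [hgcd] at hsum
    rw [← mul_assoc]
    omega

/-- the tuple `E(a_n) = (g_n·g_{n+1}; W(g_{n+1}², g_n²), 1)` satisfies the
Diophantine conditions `d² + 1 = Σ mᵢ²` and `3d − 1 = Σ mᵢ`. -/
theorem Ean_diophantine (n : ℕ) (hn : 1 ≤ n) :
    (g n * g (n+1))^2 + 1 = (((W ((g (n+1))^2) ((g n)^2)) ++ [1]).map (fun m => m^2)).sum ∧
    3 * (g n * g (n+1)) - 1 = ((W ((g (n+1))^2) ((g n)^2)) ++ [1]).sum :=
  Ean_diophantine_general n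
end

section
/- Let a > 1 be irrational. Then the set {k_{A,B}(a) : A, B nonnegative integers, (A,B) ≠ (0,0)} is bounded above, and its supremum equals the infimum of the set of real numbers μ > 0 such that N(a,1) ≼ N(μ,μ), i.e. such that for every real t ≥ 0, #{(m,n) ∈ ℤ≥0 × ℤ≥0 : (m,n) ≠ (0,0), (m + n)·μ ≤ t} ≤ #{(m,n) ∈ ℤ≥0 × ℤ≥0 : (m,n) ≠ (0,0), m·a + n ≤ t}. -/
/-!
Write `L_a(t)` for the number of `(x, y) ∈ ℕ²` with `x + a y ≤ t`, so that `N(a,1) ≼ N(μ,μ)` says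
`L_1(t/μ) ≤ L_a(t)` for all `t ≥ 0`, and `L_1(d) = (d+1)(d+2)/2`. Applying this at `t = d μ` with
`d = d^a_{A,B}` shows that `A + a B ≤ d μ`, i.e. `k_{A,B}(a) ≤ μ`. Conversely, since `a` is
irrational the values `x + a y` are pairwise distinct, so `L_a` increases by exactly one at each
of them and takes the value `(d+1)(d+2)/2` at some `A + a B`; for this `(A, B)` the degree is at
most `d`, and `k_{A,B}(a) ≤ μ` yields `A + a B ≤ d μ`, which gives `L_1(t/μ) ≤ L_a(t)` with
`d = ⌊t/μ⌋`. Boundedness by `a + 1` comes from the square `[0, s]²` inside the triangle.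
-/

/-- The number of lattice points in the triangle `T^a_{A,B} = {(x,y) : x ≥ 0, y ≥ 0, x + a·y ≤ A + a·B}`. -/
noncomputable def latticeCount (a : ℝ) (A B : ℕ) : ℕ :=
  Set.ncard {xy : ℤ × ℤ | 0 ≤ xy.1 ∧ 0 ≤ xy.2 ∧ (xy.1 : ℝ) + a * xy.2 ≤ (A : ℝ) + a * B}

/-- The smallest positive integer `d` such that `#(T^a_{A,B} ∩ ℤ²) ≤ (d+1)(d+2)/2`
(stated multiplied by 2 to avoid division). -/
noncomputable def ddeg (a : ℝ) (A B : ℕ) : ℕ :=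
  sInf {d : ℕ | 0 < d ∧ 2 * latticeCount a A B ≤ (d+1)*(d+2)}

/-- `k_{A,B}(a) := (A + a·B) / d^a_{A,B}`. -/
noncomputable def kABval (a : ℝ) (A B : ℕ) : ℝ := ((A : ℝ) + a * B) / (ddeg a A B)

theorem Finset.exists_card_filter_apply_le_eq {ι α : Type*} [DecidableEq ι] [LinearOrder α]
    {f : ι → α} (hf : Function.Injective f) (s : Finset ι) {n : ℕ} (hn₀ : 1 ≤ n)
    (hn : n ≤ s.card) : ∃ p ∈ s, (s.filter fun q => f q ≤ f p).card = n := by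
  induction s using Finset.induction_on_max_value f generalizing n with
  | empty => simp only [Finset.card_empty] at hn; omega
  | insert p s hps hmax ih =>
    rw [Finset.card_insert_of_notMem hps] at hn
    rcases hn.lt_or_eq with hlt | heq
    · obtain ⟨q, hq, hcard⟩ := ih hn₀ (by omega)
      have hpq : ¬ f p ≤ f q := fun h => hps (hf ((hmax q hq).antisymm h) ▸ hq)
      exact ⟨q, Finset.mem_insert_of_mem hq, by rw [Finset.filter_insert, if_neg hpq, hcard]⟩
    · refine ⟨p, Finset.mem_insert_self p s, ?_⟩
      rw [Finset.filter_true_of_mem fun q hq => ?_, Finset.card_insert_of_notMem hps, heq]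
      rcases Finset.mem_insert.1 hq with rfl | hq
      · exact le_rfl
      · exact hmax q hq

theorem injective_add_mul_of_irrational {a : ℝ} (ha : Irrational a) :
    Function.Injective fun p : ℕ × ℕ => (p.1 : ℝ) + a * p.2 := by
  rintro ⟨x, y⟩ ⟨x', y'⟩ h
  obtain rfl : y = y' := by
    by_contra hne
    have hz : ((y : ℤ) - y' : ℤ) ≠ 0 := sub_ne_zero.2 (by exact_mod_cast hne)
    apply (ha.intCast_mul hz).ne_int (x' - x)
    push_cast
    linarith
  obtain rfl : x = x' := by exact_mod_cast add_right_cancel h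
  rfl

def latticePoints (a t : ℝ) : Set (ℕ × ℕ) := {p | (p.1 : ℝ) + a * p.2 ≤ t}

section LatticePoints

variable {a s t : ℝ}

theorem latticePoints_mono (h : s ≤ t) : latticePoints a s ⊆ latticePoints a t :=
  fun _ hp => le_trans hp h

theorem finite_latticePoints (ha : 0 < a) (t : ℝ) : (latticePoints a t).Finite := by
  refine (Set.finite_Iic (⌊t⌋₊, ⌊t / a⌋₊)).subset fun p (hp : _ ≤ t) => ?_
  have h₁ : 0 ≤ (p.1 : ℝ) := p.1.cast_nonneg
  have h₂ : 0 ≤ a * p.2 := by positivity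
  exact ⟨Nat.le_floor (by linarith), Nat.le_floor ((le_div_iff₀ ha).2 (by linarith))⟩

theorem zero_mem_latticePoints (ht : 0 ≤ t) : (0, 0) ∈ latticePoints a t := by
  simpa [latticePoints] using ht

theorem ncard_latticePoints_pos (ha : 0 < a) (ht : 0 ≤ t) : 0 < (latticePoints a t).ncard :=
  (Set.ncard_pos (finite_latticePoints ha t)).2 ⟨_, zero_mem_latticePoints ht⟩

theorem ncard_latticePoints_mono (ha : 0 < a) (h : s ≤ t) :
    (latticePoints a s).ncard ≤ (latticePoints a t).ncard :=
  Set.ncard_le_ncard (latticePoints_mono h) (finite_latticePoints ha t)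

theorem ncard_latticePoints_lt (ha : 0 < a) {x y : ℕ} (h : s < x + a * y) :
    (latticePoints a s).ncard < (latticePoints a (x + a * y)).ncard := by
  refine Set.ncard_lt_ncard ?_ (finite_latticePoints ha _)
  exact (Set.ssubset_iff_of_subset (latticePoints_mono h.le)).2
    ⟨(x, y), le_refl (_ : ℝ), h.not_ge⟩

theorem sq_le_ncard_latticePoints (ha : 0 < a) {d : ℕ} (h : d + a * d ≤ t) :
    (d + 1) ^ 2 ≤ (latticePoints a t).ncard := by
  have hsub : ↑(Finset.range (d + 1) ×ˢ Finset.range (d + 1)) ⊆ latticePoints a t := by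
    intro p hp
    simp only [Finset.coe_product, Set.mem_prod, Finset.coe_range, Set.mem_Iio] at hp
    have h₁ : (p.1 : ℝ) ≤ d := by exact_mod_cast Nat.lt_succ_iff.1 hp.1
    have h₂ : (p.2 : ℝ) ≤ d := by exact_mod_cast Nat.lt_succ_iff.1 hp.2
    change _ ≤ t
    nlinarith
  simpa [sq] using Set.ncard_le_ncard hsub (finite_latticePoints ha t)

theorem ncard_int_latticePoints (a t : ℝ) :
    {xy : ℤ × ℤ | 0 ≤ xy.1 ∧ 0 ≤ xy.2 ∧ (xy.1 : ℝ) + a * xy.2 ≤ t}.ncard =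
      (latticePoints a t).ncard := by
  rw [← Set.ncard_image_of_injective _
    ((Nat.cast_injective (R := ℤ)).prodMap (Nat.cast_injective (R := ℤ)))]
  congr 1
  ext ⟨x, y⟩
  constructor
  · rintro ⟨hx, hy, hxy⟩
    lift x to ℕ using hx
    lift y to ℕ using hy
    exact ⟨(x, y), by simpa [latticePoints] using hxy, rfl⟩
  · rintro ⟨⟨m, n⟩, hmn, h⟩
    simp only [Prod.map, Prod.mk.injEq] at h
    obtain ⟨rfl, rfl⟩ := h
    exact ⟨by positivity, by positivity, by simpa [latticePoints] using hmn⟩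

theorem ncard_ne_zero_mul_add_le_add_one (ha : 0 < a) (ht : 0 ≤ t) :
    {mn : ℕ × ℕ | mn ≠ (0, 0) ∧ (mn.1 : ℝ) * a + mn.2 ≤ t}.ncard + 1 =
      (latticePoints a t).ncard := by
  have hswap : {mn : ℕ × ℕ | mn ≠ (0, 0) ∧ (mn.1 : ℝ) * a + mn.2 ≤ t} =
      Prod.swap '' (latticePoints a t \ {(0, 0)}) := by
    rw [Set.image_swap_eq_preimage_swap]
    ext ⟨m, n⟩
    simp [latticePoints, and_comm, mul_comm, add_comm]
  rw [hswap, Set.ncard_image_of_injective _ Prod.swap_injective,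
    Set.ncard_sdiff_singleton_add_one (zero_mem_latticePoints ht) (finite_latticePoints ha t)]

theorem exists_ncard_latticePoints_eq (ha : Irrational a) (ha₀ : 0 < a) {n : ℕ} (hn₀ : 1 ≤ n)
    (hn : n ≤ (latticePoints a t).ncard) :
    ∃ A B : ℕ, (latticePoints a (A + a * B)).ncard = n := by
  classical
  have hfin := finite_latticePoints ha₀ t
  rw [Set.ncard_eq_toFinset_card _ hfin] at hn
  obtain ⟨⟨A, B⟩, hAB, hcard⟩ :=
    Finset.exists_card_filter_apply_le_eq (injective_add_mul_of_irrational ha) _ hn₀ hn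
  refine ⟨A, B, ?_⟩
  rw [← hcard, Set.ncard_eq_toFinset_card _ (finite_latticePoints ha₀ _)]
  congr 1
  ext q
  have hle : (A : ℝ) + a * B ≤ t := by simpa [latticePoints] using hAB
  simp only [Set.Finite.mem_toFinset, Finset.mem_filter]
  exact ⟨fun hq => ⟨le_trans hq hle, hq⟩, And.right⟩

end LatticePoints

theorem latticePoints_one_eq_floor {s : ℝ} (hs : 0 ≤ s) :
    latticePoints 1 s = latticePoints 1 ⌊s⌋₊ := by
  ext p
  change _ + 1 * _ ≤ s ↔ _ + 1 * _ ≤ (⌊s⌋₊ : ℝ)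
  rw [one_mul, ← Nat.cast_add, Nat.cast_le, Nat.le_floor_iff hs]

open Finset in
theorem two_mul_ncard_latticePoints_one (d : ℕ) :
    2 * (latticePoints 1 d).ncard = (d + 1) * (d + 2) := by
  induction d with
  | zero =>
    have : latticePoints 1 ((0 : ℕ) : ℝ) = {(0, 0)} := by
      ext ⟨m, n⟩
      change (m : ℝ) + 1 * n ≤ ((0 : ℕ) : ℝ) ↔ _
      rw [one_mul, ← Nat.cast_add, Nat.cast_le]
      simp
    rw [this, Set.ncard_singleton]
  | succ d ih =>
    have hunion : latticePoints 1 (d + 1 : ℕ) = latticePoints 1 d ∪ ↑(antidiagonal (d + 1)) := by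
      ext ⟨m, n⟩
      change (m : ℝ) + 1 * n ≤ ((d + 1 : ℕ) : ℝ) ↔ (m : ℝ) + 1 * n ≤ (d : ℝ) ∨ _
      simp only [one_mul, ← Nat.cast_add, Nat.cast_le, mem_coe, HasAntidiagonal.mem_antidiagonal]
      omega
    have hdisj : Disjoint (latticePoints 1 d) ↑(antidiagonal (d + 1)) := by
      refine Set.disjoint_left.2 fun ⟨m, n⟩ h h' => ?_
      change (m : ℝ) + 1 * n ≤ (d : ℝ) at h
      rw [one_mul, ← Nat.cast_add, Nat.cast_le] at h
      rw [mem_coe, HasAntidiagonal.mem_antidiagonal] at h'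
      omega
    rw [hunion, Set.ncard_union_eq hdisj (finite_latticePoints one_pos _), Set.ncard_coe_finset,
      Nat.card_antidiagonal]
    linarith

theorem latticeCount_eq_ncard (a : ℝ) (A B : ℕ) :
    latticeCount a A B = (latticePoints a (A + a * B)).ncard :=
  ncard_int_latticePoints a _

section Degree

variable {a : ℝ}

theorem ddeg_mem (A B : ℕ) :
    ddeg a A B ∈ {d : ℕ | 0 < d ∧ 2 * latticeCount a A B ≤ (d + 1) * (d + 2)} :=
  Nat.sInf_mem ⟨latticeCount a A B + 1, Nat.succ_pos _, by nlinarith⟩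

theorem ddeg_pos (A B : ℕ) : 0 < ddeg a A B :=
  (ddeg_mem A B).1

theorem two_mul_latticeCount_le (A B : ℕ) :
    2 * latticeCount a A B ≤ (ddeg a A B + 1) * (ddeg a A B + 2) :=
  (ddeg_mem A B).2

theorem ddeg_le {A B d : ℕ} (hd : 0 < d) (h : 2 * latticeCount a A B ≤ (d + 1) * (d + 2)) :
    ddeg a A B ≤ d :=
  Nat.sInf_le ⟨hd, h⟩

theorem kABval_le_add_one (ha : 0 < a) (A B : ℕ) : kABval a A B ≤ a + 1 := by
  have hcount := two_mul_latticeCount_le (a := a) A B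
  set d := ddeg a A B
  have hd : 0 < d := ddeg_pos A B
  set t : ℝ := A + a * B
  have ht : 0 ≤ t := by positivity
  set s := ⌊t / (a + 1)⌋₊
  have hst : t / (a + 1) < s + 1 := Nat.lt_floor_add_one _
  have hs : (s : ℝ) + a * s ≤ t := by
    have := Nat.floor_le (div_nonneg ht (by positivity : (0 : ℝ) ≤ a + 1))
    rw [le_div_iff₀ (by positivity)] at this
    linarith
  have hsq := sq_le_ncard_latticePoints ha hs
  rw [← latticeCount_eq_ncard] at hsq
  have hsd : s + 1 ≤ d := by nlinarith
  have hsd' : (s : ℝ) + 1 ≤ d := by exact_mod_cast hsd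
  rw [div_lt_iff₀ (by positivity)] at hst
  rw [kABval, div_le_iff₀ (by exact_mod_cast hd)]
  calc t ≤ (s + 1) * (a + 1) := hst.le
    _ ≤ (a + 1) * d := by nlinarith

theorem kABval_le_of_ncard_le (ha : 0 < a) {μ : ℝ} (hμ : 0 < μ)
    (h : ∀ t : ℝ, 0 ≤ t → (latticePoints 1 (t / μ)).ncard ≤ (latticePoints a t).ncard)
    (A B : ℕ) : kABval a A B ≤ μ := by
  have hcount := two_mul_latticeCount_le (a := a) A B
  set d := ddeg a A B
  have hdμ := h (d * μ) (by positivity)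
  rw [mul_div_cancel_right₀ _ hμ.ne'] at hdμ
  have htri := two_mul_ncard_latticePoints_one d
  have hle : (A : ℝ) + a * B ≤ d * μ := by
    by_contra! hlt
    have := ncard_latticePoints_lt ha hlt
    rw [← latticeCount_eq_ncard] at this
    omega
  rw [kABval, div_le_iff₀ (by exact_mod_cast ddeg_pos A B)]
  linarith

theorem ncard_le_of_kABval_le (ha : Irrational a) (ha₀ : 0 < a) {μ : ℝ} (hμ : 0 < μ)
    (hk : ∀ A B : ℕ, ¬(A = 0 ∧ B = 0) → kABval a A B ≤ μ) {t : ℝ} (ht : 0 ≤ t) :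
    (latticePoints 1 (t / μ)).ncard ≤ (latticePoints a t).ncard := by
  rw [latticePoints_one_eq_floor (by positivity)]
  set d := ⌊t / μ⌋₊
  have htri := two_mul_ncard_latticePoints_one d
  have hpos := ncard_latticePoints_pos ha₀ ht
  rcases Nat.eq_zero_or_pos d with hd | hd
  · rw [hd] at htri ⊢
    omega
  have hdt : d * μ ≤ t := (le_div_iff₀ hμ).1 (Nat.floor_le (by positivity))
  obtain ⟨A, B, hAB⟩ := exists_ncard_latticePoints_eq ha ha₀ (t := d + a * d)
    (n := (latticePoints 1 d).ncard) (by nlinarith)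
    (by nlinarith [sq_le_ncard_latticePoints ha₀ (t := d + a * d) le_rfl])
  suffices hle : (A : ℝ) + a * B ≤ t by
    rw [← hAB]
    exact ncard_latticePoints_mono ha₀ hle
  by_cases hAB₀ : A = 0 ∧ B = 0
  · simpa [hAB₀] using ht
  have hdeg : ddeg a A B ≤ d := ddeg_le hd (by rw [latticeCount_eq_ncard, hAB, htri])
  have hdeg' : (ddeg a A B : ℝ) ≤ d := by exact_mod_cast hdeg
  have hk' := hk A B hAB₀
  rw [kABval, div_le_iff₀ (by exact_mod_cast ddeg_pos A B)] at hk'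
  calc (A : ℝ) + a * B ≤ μ * ddeg a A B := hk'
    _ ≤ d * μ := by nlinarith
    _ ≤ t := hdt

end Degree

theorem sequence_comparison_iff {a μ : ℝ} (ha : 0 < a) (hμ : 0 < μ) :
    (∀ t : ℝ, 0 ≤ t →
      Set.ncard {mn : ℕ × ℕ | mn ≠ (0, 0) ∧ ((mn.1 : ℝ) + (mn.2 : ℝ)) * μ ≤ t} ≤
      Set.ncard {mn : ℕ × ℕ | mn ≠ (0, 0) ∧ (mn.1 : ℝ) * a + (mn.2 : ℝ) ≤ t}) ↔
    ∀ t : ℝ, 0 ≤ t → (latticePoints 1 (t / μ)).ncard ≤ (latticePoints a t).ncard := by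
  refine forall_congr' fun t => imp_congr_right fun ht => ?_
  have hset : {mn : ℕ × ℕ | mn ≠ (0, 0) ∧ ((mn.1 : ℝ) + (mn.2 : ℝ)) * μ ≤ t} =
      {mn : ℕ × ℕ | mn ≠ (0, 0) ∧ (mn.1 : ℝ) * 1 + mn.2 ≤ t / μ} := by
    simp only [mul_one, le_div_iff₀ hμ]
  rw [hset, ← ncard_ne_zero_mul_add_le_add_one ha ht,
    ← ncard_ne_zero_mul_add_le_add_one one_pos (div_nonneg ht hμ.le), Nat.add_le_add_iff_right]

/-- for irrational `a > 1`, the set of values `k_{A,B}(a)` (over nonnegative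
integers `(A,B) ≠ (0,0)`) is bounded above, and its supremum `c_ECH(a)` equals the infimum of
the set of `μ > 0` such that `N(a,1) ≼ N(μ,μ)`, i.e. such that for every `t ≥ 0` the number of
pairs `(m,n) ≠ (0,0)` of nonnegative integers with `(m+n)·μ ≤ t` is at most the number with
`m·a + n ≤ t`. -/
theorem cECH_eq_sequence_comparison (a : ℝ) (ha : Irrational a) (h1 : 1 < a) :
    BddAbove {x : ℝ | ∃ A B : ℕ, ¬ (A = 0 ∧ B = 0) ∧ x = kABval a A B} ∧
    sSup {x : ℝ | ∃ A B : ℕ, ¬ (A = 0 ∧ B = 0) ∧ x = kABval a A B} =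
      sInf {μ : ℝ | 0 < μ ∧ ∀ t : ℝ, 0 ≤ t →
        Set.ncard {mn : ℕ × ℕ | mn ≠ (0, 0) ∧ ((mn.1 : ℝ) + (mn.2 : ℝ)) * μ ≤ t} ≤
        Set.ncard {mn : ℕ × ℕ | mn ≠ (0, 0) ∧ (mn.1 : ℝ) * a + (mn.2 : ℝ) ≤ t}} := by
  have ha₀ : 0 < a := zero_lt_one.trans h1
  set K := {x : ℝ | ∃ A B : ℕ, ¬ (A = 0 ∧ B = 0) ∧ x = kABval a A B}
  have hbdd : BddAbove K := ⟨a + 1, by rintro _ ⟨A, B, -, rfl⟩; exact kABval_le_add_one ha₀ A B⟩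
  have h10 : kABval a 1 0 ∈ K := ⟨1, 0, by simp, rfl⟩
  have hK₀ : 0 < sSup K := by
    refine lt_of_lt_of_le ?_ (le_csSup hbdd h10)
    simpa [kABval] using ddeg_pos (a := a) 1 0
  refine ⟨hbdd, (csInf_Ici (a := sSup K)).symm.trans (congrArg sInf ?_)⟩
  ext μ
  refine ⟨fun hμ => ?_, fun ⟨hμ, hcmp⟩ => ?_⟩
  · have hμ₀ : 0 < μ := hK₀.trans_le hμ
    refine ⟨hμ₀, (sequence_comparison_iff ha₀ hμ₀).2 fun t ht => ?_⟩
    exact ncard_le_of_kABval_le ha ha₀ hμ₀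
      (fun A B hAB => (le_csSup hbdd ⟨A, B, hAB, rfl⟩).trans hμ) ht
  · refine csSup_le ⟨_, h10⟩ ?_
    rintro _ ⟨A, B, -, rfl⟩
    exact kABval_le_of_ncard_le ha₀ hμ ((sequence_comparison_iff ha₀ hμ).1 hcmp) A B
end
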